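/- arXiv:1607.06432 — 2 statements merged into one kernel-verified Lean document; each statement's English description precedes it below -/
import Mathlib

section
/- Let 0 < η < 1, let 𝒮 be a countable η-sparse family of cubes in ℝⁿ, and let w ∈ A∞. Then for every cube R, ∑_{Q∈𝒮, Q⊆R} w(Q) ≤ η⁻¹ [w]_{A∞} w(R). -/
open MeasureTheory Set Filter ENNReal

noncomputable section

/-- Euclidean space `ℝⁿ` with Lebesgue measure. -/
abbrev En (n : ℕ) := EuclideanSpace ℝ (Fin n)

/-- An axis-parallel (closed) cube in `ℝⁿ`, given by its lower corner and side length. -/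
structure Cube (n : ℕ) where
  corner : Fin n → ℝ
  side : ℝ
  side_pos : 0 < side

namespace Cube

/-- The underlying set of a cube. -/
def set {n : ℕ} (Q : Cube n) : Set (En n) :=
  {x | ∀ i, Q.corner i ≤ x i ∧ x i ≤ Q.corner i + Q.side}

end Cube

/-- Weighted measure `w(s) = ∫_s w dx` of a set, as an extended real. -/
def wMeas {n : ℕ} (w : En n → ℝ) (s : Set (En n)) : ℝ≥0∞ :=
  ∫⁻ x in s, ENNReal.ofReal (w x)

/-- `(|s|⁻¹ ∫_s |f|^q)^{1/q}`. -/
def avgq {n : ℕ} (q : ℝ) (f : En n → ℝ) (s : Set (En n)) : ℝ≥0∞ :=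
  ((volume s)⁻¹ * ∫⁻ y in s, ENNReal.ofReal |f y| ^ q) ^ (1/q)

/-- The maximal operator `M_q f(x) = sup_{Q ∋ x} (|Q|⁻¹ ∫_Q |f|^q)^{1/q}`,
supremum over all axis-parallel cubes containing `x`. -/
def Mq {n : ℕ} (q : ℝ) (f : En n → ℝ) (x : En n) : ℝ≥0∞ :=
  ⨆ (Q : Cube n) (_ : x ∈ Q.set), avgq q f Q.set

/-- The Hardy–Littlewood maximal operator `M = M_1`. -/
def MHL {n : ℕ} (f : En n → ℝ) (x : En n) : ℝ≥0∞ := Mq 1 f x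

/-- `L^p(w)` norm `(∫ |f|^p w dx)^{1/p}` with an `ℝ≥0∞`-valued weight `w`. -/
def wnormE {n : ℕ} (p : ℝ) (w : En n → ℝ≥0∞) (f : En n → ℝ) : ℝ≥0∞ :=
  (∫⁻ x, ENNReal.ofReal |f x| ^ p * w x) ^ (1/p)

/-- `L^p(w)` norm `(∫ |f|^p w dx)^{1/p}` with a real weight `w`. -/
def wnorm {n : ℕ} (p : ℝ) (w : En n → ℝ) (f : En n → ℝ) : ℝ≥0∞ :=
  wnormE p (fun x => ENNReal.ofReal (w x)) f

/-- The Fujii–Wilson `A_∞` constant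
`[w]_{A_∞} = sup_Q w(Q)⁻¹ ∫_Q M(w χ_Q) dx` (sup over cubes with `w(Q) > 0`). -/
def Ainf {n : ℕ} (w : En n → ℝ) : ℝ≥0∞ :=
  ⨆ (Q : Cube n) (_ : 0 < wMeas w Q.set),
    (wMeas w Q.set)⁻¹ * ∫⁻ x in Q.set, MHL (Q.set.indicator w) x

/-- The `A₁` constant of a weight: the least `κ` such that `Mw ≤ κ·w` a.e. -/
def A1const {n : ℕ} (w : En n → ℝ) : ℝ≥0∞ :=
  sInf {κ : ℝ≥0∞ | ∀ᵐ x : En n, MHL w x ≤ κ * ENNReal.ofReal (w x)}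

/-- The `A_q` constant of a weight, for `1 < q < ∞`. -/
def Aqconst {n : ℕ} (q : ℝ) (w : En n → ℝ) : ℝ≥0∞ :=
  ⨆ Q : Cube n, ((volume Q.set)⁻¹ * wMeas w Q.set) *
    ((volume Q.set)⁻¹ * ∫⁻ x in Q.set, ENNReal.ofReal (w x) ^ (-(1/(q-1)))) ^ (q-1)

/-- The `A_q` constant, with the convention that for `q = 1` it is the `A₁` constant. -/
def AqC {n : ℕ} (q : ℝ) (w : En n → ℝ) : ℝ≥0∞ :=
  if q = 1 then A1const w else Aqconst q w

/-- The BMO norm of `b`: `sup_Q |Q|⁻¹ ∫_Q |b - b_Q|`. -/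
def bmoNorm {n : ℕ} (b : En n → ℝ) : ℝ≥0∞ :=
  ⨆ Q : Cube n, (volume Q.set)⁻¹ *
    ∫⁻ x in Q.set, ENNReal.ofReal |b x - ⨍ y in Q.set, b y|

/-- Radial projection onto the unit sphere (junk value `0` at the origin). -/
def dir {n : ℕ} (y : En n) : En n := ‖y‖⁻¹ • y

/-- The surface measure on the unit sphere `S^{n-1}`. -/
def sphMeas (n : ℕ) : Measure (Metric.sphere (0 : En n) 1) :=
  (volume : Measure (En n)).toSphere

/-- `‖Ω‖_{L^∞(S^{n-1})}`. -/
def sphLinfty {n : ℕ} (Ω : En n → ℝ) : ℝ≥0∞ :=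
  eLpNorm (fun ω : Metric.sphere (0 : En n) 1 => Ω ω) ∞ (sphMeas n)

/-- `Ω` has mean zero on the unit sphere. -/
def sphMeanZero {n : ℕ} (Ω : En n → ℝ) : Prop :=
  ∫ ω : Metric.sphere (0 : En n) 1, Ω ω ∂(sphMeas n) = 0

/-- `g` is a version of `T_Ω f`: for a.e. `x` the truncated singular integrals
`∫_{|y|>ε} Ω(y/|y|)|y|^{-n} f(x-y) dy` converge to `g x` as `ε → 0⁺`. -/
def IsTOmega {n : ℕ} (Ω f g : En n → ℝ) : Prop :=
  ∀ᵐ x : En n, Tendsto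
    (fun ε : ℝ => ∫ y in {y : En n | ε < ‖y‖}, Ω (dir y) * ‖y‖ ^ (-(n:ℝ)) * f (x - y))
    (nhdsWithin 0 (Set.Ioi 0)) (nhds (g x))

/-- `h` is a version of the commutator `[b, T_Ω] f`. -/
def IsCommTOmega {n : ℕ} (Ω b f h : En n → ℝ) : Prop :=
  ∀ᵐ x : En n, Tendsto
    (fun ε : ℝ => ∫ y in {y : En n | ε < ‖x - y‖},
      (b x - b y) * Ω (dir (x - y)) * ‖x - y‖ ^ (-(n:ℝ)) * f y)
    (nhdsWithin 0 (Set.Ioi 0)) (nhds (h x))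

/-- The dilated mollifier `φ_m(x) = 2^{-mn} φ(2^{-m} x)`. -/
def mollify {n : ℕ} (φ : En n → ℝ) (m : ℤ) : En n → ℝ :=
  fun x => (2:ℝ) ^ (-(m * (n:ℤ))) * φ ((2:ℝ) ^ (-m) • x)

/-- The truncated kernel `K_k = K·χ_{{2^k ≤ |y| < 2^{k+1}}}`, `K(y) = Ω(y/|y|)|y|^{-n}`. -/
def Kk {n : ℕ} (Ω : En n → ℝ) (k : ℤ) : En n → ℝ :=
  ({y : En n | (2:ℝ)^k ≤ ‖y‖ ∧ ‖y‖ < (2:ℝ)^(k+1)}).indicator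
    (fun y => Ω (dir y) * ‖y‖ ^ (-(n:ℝ)))

/-- Convolution of real-valued functions on `ℝⁿ`. -/
def conv {n : ℕ} (f g : En n → ℝ) : En n → ℝ :=
  convolution f g (ContinuousLinearMap.lsmul ℝ ℝ) volume

/-- `Δ_j φ_k := φ_{k-N(j)} - φ_{k-N(j-1)}` for `j ≥ 1`, and `Δ_0 φ_k := φ_k`. -/
def deltaPhi {n : ℕ} (φ : En n → ℝ) (N : ℕ → ℕ) (j : ℕ) (k : ℤ) : En n → ℝ :=
  if j = 0 then mollify φ k
  else fun x => mollify φ (k - (N j : ℤ)) x - mollify φ (k - (N (j-1) : ℤ)) x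

/-- The piece `T̃_j^N f (x) = ∑_{k ∈ ℤ} (K_k * (f * Δ_j φ_k))(x)`. -/
def Ttilde {n : ℕ} (φ Ω : En n → ℝ) (N : ℕ → ℕ) (j : ℕ) (f : En n → ℝ) : En n → ℝ :=
  fun x => ∑' k : ℤ, conv (Kk Ω k) (conv f (deltaPhi φ N j k)) x

/-- `h` is a version of the commutator `[b, T̃_j^N] f`: for a.e. `x` the series
`∑_k (b(x)·(K_k*(f*Δ_jφ_k))(x) - (K_k*((bf)*Δ_jφ_k))(x))` sums to `h x`. -/
def IsCommTtilde {n : ℕ} (φ Ω b : En n → ℝ) (N : ℕ → ℕ) (j : ℕ) (f h : En n → ℝ) : Prop :=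
  ∀ᵐ x : En n, HasSum (fun k : ℤ =>
    b x * conv (Kk Ω k) (conv f (deltaPhi φ N j k)) x
      - conv (Kk Ω k) (conv (fun y => b y * f y) (deltaPhi φ N j k)) x) (h x)

/-- The Luxemburg norm `‖f‖_{Ψ(L),s} = inf{λ > 0 : |s|⁻¹ ∫_s Ψ(|f|/λ) ≤ 1}`. -/
def luxNorm {n : ℕ} (Ψ : ℝ → ℝ) (f : En n → ℝ) (s : Set (En n)) : ℝ≥0∞ :=
  sInf (ENNReal.ofReal '' {lam : ℝ | 0 < lam ∧
    (volume s)⁻¹ * ∫⁻ x in s, ENNReal.ofReal (Ψ (|f x| / lam)) ≤ 1})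

/-- The Orlicz maximal operator `M_{Ψ(L)} f(x) = sup_{Q ∋ x} ‖f‖_{Ψ(L),Q}`. -/
def MOrlicz {n : ℕ} (Ψ : ℝ → ℝ) (f : En n → ℝ) (x : En n) : ℝ≥0∞ :=
  ⨆ (Q : Cube n) (_ : x ∈ Q.set), luxNorm Ψ f Q.set

/-- An `η`-sparse family of cubes. -/
def IsSparse {n : ℕ} {ι : Type} (η : ℝ) (S : ι → Cube n) : Prop :=
  ∃ E : ι → Set (En n), (∀ i, MeasurableSet (E i) ∧ E i ⊆ (S i).set ∧
    ENNReal.ofReal η * volume (S i).set ≤ volume (E i)) ∧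
    Pairwise (Function.onFun Disjoint E)

/-- The dyadic cube `2^{-k}([0,1)ⁿ + m)` of the standard dyadic grid. -/
def dyadicCube (n : ℕ) (k : ℤ) (m : Fin n → ℤ) : Set (En n) :=
  {x | ∀ i, (m i : ℝ) * (2:ℝ)^(-k) ≤ x i ∧ x i < ((m i : ℝ) + 1) * (2:ℝ)^(-k)}

/-- `Φ(t) = t(1 + log⁺ t)`, the Young function of `L log L`. -/
def PhiLlogL : ℝ → ℝ := fun t => t * (1 + max (Real.log t) 0)

/-- The sequence `N(0) = 0`, `N(j) = 2^j` for `j ≥ 1` (real-valued). -/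
def Nexp : ℕ → ℝ := fun j => if j = 0 then 0 else 2 ^ j


/-!
Every `Q ⊆ R` of the family satisfies `w(Q)/|Q| ≤ M(wχ_R)` on its sparse piece `E_Q`, which carries
an `η`-fraction of `|Q|`. Integrating over the disjoint pieces, all inside `R`, gives
`η ∑ w(Q) ≤ ∫_R M(wχ_R) ≤ [w]_{A∞} w(R)`, the last step being the definition of `[w]_{A∞}`.
-/

namespace Cube

variable {n : ℕ} (Q : Cube n)

lemma set_eq_preimage_pi : Q.set = (MeasurableEquiv.toLp 2 (Fin n → ℝ)).symm ⁻¹'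
    Set.univ.pi fun i => Set.Icc (Q.corner i) (Q.corner i + Q.side) := by
  ext x
  simp only [Cube.set, Set.mem_preimage, Set.mem_pi, Set.mem_univ, Set.mem_Icc,
    forall_true_left, Set.mem_ofPred_eq]
  rfl

lemma isCompact_set : IsCompact Q.set := by
  rw [set_eq_preimage_pi, MeasurableEquiv.preimage_symm]
  exact (isCompact_univ_pi fun i => isCompact_Icc).image (PiLp.continuous_toLp 2 _)

lemma measurableSet_set : MeasurableSet Q.set :=
  Q.isCompact_set.measurableSet

lemma volume_set : volume Q.set = ENNReal.ofReal Q.side ^ n := by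
  rw [set_eq_preimage_pi,
    (EuclideanSpace.volume_preserving_symm_measurableEquiv_toLp (Fin n)).measure_preimage
      (MeasurableSet.univ_pi fun i => measurableSet_Icc).nullMeasurableSet, volume_pi_pi]
  simp [Real.volume_Icc]

lemma volume_pos : 0 < volume Q.set := by
  rw [Q.volume_set]
  exact ENNReal.pow_pos (ENNReal.ofReal_pos.2 Q.side_pos) n

lemma volume_ne_top : volume Q.set ≠ ⊤ :=
  Q.isCompact_set.measure_ne_top

end Cube

section WeightedMeasure

variable {n : ℕ} {w : En n → ℝ}

lemma wMeas_mono {s t : Set (En n)} (h : s ⊆ t) : wMeas w s ≤ wMeas w t :=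
  lintegral_mono_set h

lemma MeasureTheory.LocallyIntegrable.wMeas_cube_ne_top (hw : LocallyIntegrable w volume)
    (Q : Cube n) : wMeas w Q.set ≠ ⊤ :=
  (hw.integrableOn_isCompact Q.isCompact_set).setLIntegral_lt_top.ne

lemma avg_le_MHL (f : En n → ℝ) {Q : Cube n} {x : En n} (hx : x ∈ Q.set) :
    (volume Q.set)⁻¹ * ∫⁻ y in Q.set, ENNReal.ofReal (f y) ≤ MHL f x := by
  have hQ : avgq 1 f Q.set ≤ MHL f x :=
    le_iSup₂ (f := fun (Q' : Cube n) (_ : x ∈ Q'.set) => avgq 1 f Q'.set) Q hx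
  refine le_trans ?_ hQ
  simp only [avgq, ENNReal.rpow_one, div_one]
  gcongr with y
  exact le_abs_self (f y)

lemma wMeas_div_volume_le_MHL_indicator {Q R : Cube n} (hQR : Q.set ⊆ R.set) {x : En n}
    (hx : x ∈ Q.set) :
    (volume Q.set)⁻¹ * wMeas w Q.set ≤ MHL (R.set.indicator w) x := by
  have hw : wMeas w Q.set = ∫⁻ y in Q.set, ENNReal.ofReal (R.set.indicator w y) :=
    setLIntegral_congr_fun Q.measurableSet_set fun y hy => by rw [indicator_of_mem (hQR hy)]
  rw [hw]
  exact avg_le_MHL _ hx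

lemma lintegral_MHL_indicator_le_Ainf_mul (R : Cube n) (h0 : wMeas w R.set ≠ 0)
    (htop : wMeas w R.set ≠ ⊤) :
    ∫⁻ x in R.set, MHL (R.set.indicator w) x ≤ Ainf w * wMeas w R.set := by
  rw [mul_comm, ← ENNReal.inv_mul_le_iff h0 htop]
  exact le_iSup₂ (f := fun (Q : Cube n) (_ : 0 < wMeas w Q.set) =>
    (wMeas w Q.set)⁻¹ * ∫⁻ x in Q.set, MHL (Q.set.indicator w) x) R (pos_iff_ne_zero.2 h0)

end WeightedMeasure

lemma IsSparse.ofReal_mul_tsum_wMeas_le {n : ℕ} {ι : Type} [Countable ι] {η : ℝ}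
    {S : ι → Cube n} (hS : IsSparse η S) (w : En n → ℝ) (R : Cube n) :
    ENNReal.ofReal η * ∑' i : {i : ι // (S i).set ⊆ R.set}, wMeas w (S i.1).set ≤
      ∫⁻ x in R.set, MHL (R.set.indicator w) x := by
  obtain ⟨E, hE, hEdisj⟩ := hS
  have hpiece (i : {i : ι // (S i).set ⊆ R.set}) :
      ENNReal.ofReal η * wMeas w (S i.1).set ≤ ∫⁻ x in E i.1, MHL (R.set.indicator w) x := by
    obtain ⟨hEm, hEQ, hEvol⟩ := hE i.1
    set Q := S i.1
    calc ENNReal.ofReal η * wMeas w Q.set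
        = (volume Q.set)⁻¹ * volume Q.set * (ENNReal.ofReal η * wMeas w Q.set) := by
          rw [ENNReal.inv_mul_cancel Q.volume_pos.ne' Q.volume_ne_top, one_mul]
      _ = (volume Q.set)⁻¹ * wMeas w Q.set * (ENNReal.ofReal η * volume Q.set) := by ring
      _ ≤ (volume Q.set)⁻¹ * wMeas w Q.set * volume (E i.1) := by gcongr
      _ = ∫⁻ _ in E i.1, (volume Q.set)⁻¹ * wMeas w Q.set := (setLIntegral_const _ _).symm
      _ ≤ ∫⁻ x in E i.1, MHL (R.set.indicator w) x :=
          setLIntegral_mono' hEm fun x hx => wMeas_div_volume_le_MHL_indicator i.2 (hEQ hx)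
  have hdisj : Pairwise (Function.onFun Disjoint fun i : {i : ι // (S i).set ⊆ R.set} => E i.1) :=
    fun _ _ hij => hEdisj (Subtype.coe_injective.ne hij)
  calc ENNReal.ofReal η * ∑' i : {i : ι // (S i).set ⊆ R.set}, wMeas w (S i.1).set
      = ∑' i : {i : ι // (S i).set ⊆ R.set}, ENNReal.ofReal η * wMeas w (S i.1).set :=
        ENNReal.tsum_mul_left.symm
    _ ≤ ∑' i : {i : ι // (S i).set ⊆ R.set}, ∫⁻ x in E i.1, MHL (R.set.indicator w) x :=
        ENNReal.tsum_le_tsum hpiece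
    _ = ∫⁻ x in ⋃ i : {i : ι // (S i).set ⊆ R.set}, E i.1, MHL (R.set.indicator w) x :=
        (lintegral_iUnion (fun i : {i : ι // (S i).set ⊆ R.set} => (hE i.1).1) hdisj _).symm
    _ ≤ ∫⁻ x in R.set, MHL (R.set.indicator w) x :=
        lintegral_mono_set (iUnion_subset fun i => (hE i.1).2.1.trans i.2)

theorem sparse_carleson_general (n : ℕ) (η : ℝ) (hη0 : 0 < η)
    (ι : Type) [Countable ι] (S : ι → Cube n) (hS : IsSparse η S)
    (w : En n → ℝ) (hwloc : LocallyIntegrable w volume) (R : Cube n) :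
    (∑' i : {i : ι // (S i).set ⊆ R.set}, wMeas w (S i.1).set) ≤
      (ENNReal.ofReal η)⁻¹ * Ainf w * wMeas w R.set := by
  by_cases hR0 : wMeas w R.set = 0
  · have hQ0 (i : {i : ι // (S i).set ⊆ R.set}) : wMeas w (S i.1).set = 0 :=
      le_zero_iff.1 (hR0 ▸ wMeas_mono i.2)
    simp [hQ0]
  rw [mul_assoc, ← ENNReal.div_eq_inv_mul,
    ENNReal.le_div_iff_mul_le (Or.inl (ENNReal.ofReal_pos.2 hη0).ne')
      (Or.inl ENNReal.ofReal_ne_top), mul_comm]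
  exact (hS.ofReal_mul_tsum_wMeas_le w R).trans
    (lintegral_MHL_indicator_le_Ainf_mul R hR0 (hwloc.wMeas_cube_ne_top R))

/-- The Carleson-type packing condition for sparse families and `A_∞` weights. -/
theorem sparse_carleson (n : ℕ) (hn : 1 ≤ n) (η : ℝ) (hη0 : 0 < η) (hη1 : η < 1)
    (ι : Type) [Countable ι] (S : ι → Cube n) (hS : IsSparse η S)
    (w : En n → ℝ) (hw0 : ∀ x, 0 ≤ w x) (hwloc : LocallyIntegrable w volume) (hwA : Ainf w < ⊤) (R : Cube n) :
    (∑' i : {i : ι // (S i).set ⊆ R.set}, wMeas w (S i.1).set) ≤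
      (ENNReal.ofReal η)⁻¹ * Ainf w * wMeas w R.set :=
  sparse_carleson_general n η hη0 ι S hS w hwloc R
end
end

section
/- Let 𝒟 be the standard dyadic grid in ℝⁿ, let w be a weight that is positive almost everywhere, and let {a_Q}_{Q∈𝒟} be nonnegative numbers satisfying the Carleson condition: there is A > 0 such that ∑_{Q∈𝒟, Q⊆R} a_Q ≤ A·w(R) for every R ∈ 𝒟. Then for every p ∈ (1,∞) and every nonnegative f ∈ L^p(w), (∑_{Q∈𝒟} a_Q ((1/w(Q)) ∫_Q f w dx)^p)^{1/p} ≤ A^{1/p} · p' · ‖f‖_{L^p(w)}, where p' := p/(p−1). -/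
open MeasureTheory Set Filter ENNReal

noncomputable section

/-!
Let `μ = w dx` and write `⟨f⟩_Q` for the `μ`-average of `f` over `Q`. The Carleson sum is
`∫ ⟨f⟩_Q^p dν(Q)` for the measure `ν = ∑_Q a_Q δ_Q` on the grid. A finite family of dyadic cubes
is covered by its maximal members, which are pairwise disjoint; hence the Carleson condition gives
`ν{Q : ⟨f⟩_Q > t} ≤ A μ{M f > t}`, where `M` is the dyadic maximal operator with respect to `μ`,
and by the layer cake formula the sum is at most `A ∫ (M f)^p dμ`.

The same decomposition gives the weak type bound `t μ{M f > t} ≤ ∫_{M f > t} f dμ`. Integrated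
against `t^{p-2} dt` and combined with Hölder's inequality it yields Doob's inequality
`‖M f‖_p ≤ p' ‖f‖_p`, provided `‖M f‖_p < ∞`. Finiteness follows in the same way from
`M f ≤ t/2 + M (f 1_{f > t/2})` and the weak type bound for `f 1_{f > t/2}`.
-/

section LayerCake

variable {α β : Type*} [MeasurableSpace α] [MeasurableSpace β]

theorem lintegral_Ioo_rpow_sub_one {q : ℝ} (hq : 0 < q) {b : ℝ} (hb : 0 ≤ b) :
    ∫⁻ t in Ioo 0 b, ENNReal.ofReal (t ^ (q - 1)) = ENNReal.ofReal (b ^ q / q) := by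
  have hint : IntegrableOn (fun t : ℝ => t ^ (q - 1)) (Ioc 0 b) :=
    (intervalIntegrable_iff_integrableOn_Ioc_of_le hb).1
      (intervalIntegral.intervalIntegrable_rpow' (by linarith))
  rw [setLIntegral_congr Ioo_ae_eq_Ioc, ← ofReal_integral_eq_lintegral_ofReal hint
    ((ae_restrict_iff' measurableSet_Ioc).2 (.of_forall fun t ht => Real.rpow_nonneg ht.1.le _)),
    ← intervalIntegral.integral_of_le hb, integral_rpow (Or.inl (by linarith))]
  simp [Real.zero_rpow hq.ne']

theorem rpow_eq_ofReal_mul_setLIntegral_rpow_sub_one {q : ℝ} (hq : 0 < q) (c : ℝ≥0∞) :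
    c ^ q = ENNReal.ofReal q *
      ∫⁻ t in Ioi 0 ∩ {t | ENNReal.ofReal t < c}, ENNReal.ofReal (t ^ (q - 1)) := by
  have finite : ∀ c ≠ ⊤, c ^ q = ENNReal.ofReal q *
      ∫⁻ t in Ioi 0 ∩ {t | ENNReal.ofReal t < c}, ENNReal.ofReal (t ^ (q - 1)) := by
    intro c hc
    have hset : Ioi 0 ∩ {t | ENNReal.ofReal t < c} = Ioo 0 c.toReal := by
      ext t
      simp only [mem_inter_iff, mem_Ioi, mem_ofPred_eq, mem_Ioo, and_congr_right_iff]
      exact fun ht => ENNReal.ofReal_lt_iff_lt_toReal ht.le hc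
    rw [hset, lintegral_Ioo_rpow_sub_one hq toReal_nonneg, ← ENNReal.ofReal_mul hq.le,
      mul_div_cancel₀ _ hq.ne', ← ENNReal.ofReal_rpow_of_nonneg toReal_nonneg hq.le,
      ofReal_toReal hc]
  rcases eq_or_ne c ⊤ with rfl | hc
  · refine (top_rpow_of_pos hq).trans (eq_top_of_forall_nnreal_le fun r => ?_).symm
    calc (r : ℝ≥0∞) = ((r : ℝ≥0∞) ^ q⁻¹) ^ q := (rpow_inv_rpow hq.ne' _).symm
      _ = _ := finite _ (rpow_ne_top_of_nonneg (inv_nonneg.2 hq.le) coe_ne_top)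
      _ ≤ _ := by
        gcongr
        exact le_top
  · exact finite c hc

theorem lintegral_rpow_eq_lintegral_meas_ofReal_lt_mul (μ : Measure α) [SFinite μ]
    {F : α → ℝ≥0∞} (hF : Measurable F) {q : ℝ} (hq : 0 < q) :
    ∫⁻ x, F x ^ q ∂μ = ENNReal.ofReal q *
      ∫⁻ t in Ioi 0, μ {x | ENNReal.ofReal t < F x} * ENNReal.ofReal (t ^ (q - 1)) := by
  set E := {z : α × ℝ | ENNReal.ofReal z.2 < F z.1}
  have hE : MeasurableSet E := measurableSet_lt (by fun_prop) (hF.comp measurable_fst)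
  have hsection : ∀ x, ∫⁻ t in Ioi 0 ∩ {t | ENNReal.ofReal t < F x}, ENNReal.ofReal (t ^ (q - 1))
      = ∫⁻ t in Ioi 0, E.indicator (fun z => ENNReal.ofReal (z.2 ^ (q - 1))) (x, t) := by
    intro x
    rw [inter_comm, ← Measure.restrict_restrict (measurableSet_lt (by fun_prop) measurable_const),
      ← lintegral_indicator (measurableSet_lt (by fun_prop) measurable_const)]
    rfl
  calc ∫⁻ x, F x ^ q ∂μ
      = ENNReal.ofReal q * ∫⁻ x, ∫⁻ t in Ioi (0 : ℝ),
          E.indicator (fun z => ENNReal.ofReal (z.2 ^ (q - 1))) (x, t) ∂volume ∂μ := by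
        simp_rw [rpow_eq_ofReal_mul_setLIntegral_rpow_sub_one hq (F _), hsection]
        exact lintegral_const_mul' _ _ ofReal_ne_top
    _ = ENNReal.ofReal q * ∫⁻ t in Ioi (0 : ℝ), ∫⁻ x,
          E.indicator (fun z => ENNReal.ofReal (z.2 ^ (q - 1))) (x, t) ∂μ := by
        congr 1
        exact lintegral_lintegral_swap ((Measurable.indicator (by fun_prop) hE).aemeasurable)
    _ = _ := by
        congr 1
        refine lintegral_congr fun t => ?_
        rw [mul_comm, ← lintegral_indicator_const (measurableSet_lt measurable_const hF)]
        rfl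

theorem measurable_measure_ofReal_lt (μ : Measure α) (F : α → ℝ≥0∞) :
    Measurable fun t : ℝ => μ {x | ENNReal.ofReal t < F x} :=
  Antitone.measurable fun _ _ hst => measure_mono fun _ hx =>
    (ENNReal.ofReal_le_ofReal hst).trans_lt hx

theorem lintegral_rpow_le_of_meas_lt_le {μ : Measure α} {ν : Measure β} [SFinite μ] [SFinite ν]
    {F : α → ℝ≥0∞} {G : β → ℝ≥0∞} (hF : Measurable F) (hG : Measurable G) {p : ℝ} (hp : 0 < p)
    {C : ℝ≥0∞}
    (h : ∀ t : ℝ, 0 < t →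
      μ {x | ENNReal.ofReal t < F x} ≤ C * ν {y | ENNReal.ofReal t < G y}) :
    ∫⁻ x, F x ^ p ∂μ ≤ C * ∫⁻ y, G y ^ p ∂ν := by
  have hm : Measurable fun t : ℝ =>
      ν {y | ENNReal.ofReal t < G y} * ENNReal.ofReal (t ^ (p - 1)) :=
    (measurable_measure_ofReal_lt ν G).mul (by fun_prop)
  rw [lintegral_rpow_eq_lintegral_meas_ofReal_lt_mul μ hF hp,
    lintegral_rpow_eq_lintegral_meas_ofReal_lt_mul ν hG hp, mul_left_comm,
    ← lintegral_const_mul _ hm]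
  gcongr ENNReal.ofReal p * ?_
  refine setLIntegral_mono' measurableSet_Ioi fun t ht => ?_
  rw [← mul_assoc]
  gcongr
  exact h t ht

theorem lintegral_rpow_le_of_mul_meas_lt_le (μ : Measure α) [SFinite μ] {F G u : α → ℝ≥0∞}
    (hF : Measurable F) (hG : Measurable G) (hu : Measurable u) {p : ℝ} (hp : 1 < p) {C : ℝ≥0∞}
    (hweak : ∀ t : ℝ, 0 < t → ENNReal.ofReal t * μ {x | ENNReal.ofReal t < F x} ≤
      C * ∫⁻ x in {x | ENNReal.ofReal t < G x}, u x ∂μ) :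
    ∫⁻ x, F x ^ p ∂μ ≤ C * ENNReal.ofReal (p / (p - 1)) * ∫⁻ x, u x * G x ^ (p - 1) ∂μ := by
  set ν := μ.withDensity u
  have hν : ∀ t : ℝ, ν {x | ENNReal.ofReal t < G x} =
      ∫⁻ x in {x | ENNReal.ofReal t < G x}, u x ∂μ :=
    fun t => withDensity_apply _ (measurableSet_lt measurable_const hG)
  have hp' : ENNReal.ofReal p = ENNReal.ofReal (p / (p - 1)) * ENNReal.ofReal (p - 1) := by
    rw [← ENNReal.ofReal_mul (div_nonneg (by linarith) (by linarith)),
      div_mul_cancel₀ _ (by linarith)]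
  have hm : Measurable fun t : ℝ =>
      ν {x | ENNReal.ofReal t < G x} * ENNReal.ofReal (t ^ (p - 1 - 1)) :=
    (measurable_measure_ofReal_lt ν G).mul (by fun_prop)
  calc ∫⁻ x, F x ^ p ∂μ
      = ENNReal.ofReal p *
          ∫⁻ t in Ioi 0, μ {x | ENNReal.ofReal t < F x} * ENNReal.ofReal (t ^ (p - 1)) :=
        lintegral_rpow_eq_lintegral_meas_ofReal_lt_mul μ hF (by linarith)
    _ ≤ ENNReal.ofReal p * ∫⁻ t in Ioi 0,
          C * (ν {x | ENNReal.ofReal t < G x} * ENNReal.ofReal (t ^ (p - 1 - 1))) := by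
        gcongr ENNReal.ofReal p * ?_
        refine setLIntegral_mono' measurableSet_Ioi fun t (ht : 0 < t) => ?_
        have ht' : t ^ (p - 1) = t * t ^ (p - 1 - 1) := by
          rw [← Real.rpow_one_add' ht.le (by linarith), add_sub_cancel]
        rw [ht', ENNReal.ofReal_mul ht.le, ← mul_assoc, mul_comm (μ _), hν, ← mul_assoc]
        gcongr ?_ * _
        exact hweak t ht
    _ = C * ENNReal.ofReal (p / (p - 1)) * ∫⁻ x, G x ^ (p - 1) ∂ν := by
        rw [lintegral_const_mul _ hm,
          lintegral_rpow_eq_lintegral_meas_ofReal_lt_mul ν hG (by linarith), hp']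
        ring
    _ = C * ENNReal.ofReal (p / (p - 1)) * ∫⁻ x, u x * G x ^ (p - 1) ∂μ := by
        rw [lintegral_withDensity_eq_lintegral_mul μ hu (hG.pow_const _)]
        rfl

end LayerCake

theorem measure_biUnion_eq_iSup_finset {α ι : Type*} [MeasurableSpace α] [Countable ι]
    (μ : Measure α) (s : ι → Set α) (S : Set ι) :
    μ (⋃ i ∈ S, s i) = ⨆ (F : Finset ι) (_ : ↑F ⊆ S), μ (⋃ i ∈ F, s i) := by
  refine le_antisymm ?_ (iSup₂_le fun F hF => measure_mono (biUnion_subset_biUnion_left hF))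
  have hU : ⋃ i ∈ S, s i = ⋃ F : {F : Finset ι // ↑F ⊆ S}, ⋃ i ∈ F.1, s i := by
    refine subset_antisymm (iUnion₂_subset fun i hi => ?_)
      (iUnion_subset fun F => biUnion_subset_biUnion_left F.2)
    exact subset_iUnion_of_subset ⟨{i}, by simpa using hi⟩ (by simp)
  have hdir : Directed (· ⊆ ·) fun F : {F : Finset ι // ↑F ⊆ S} => ⋃ i ∈ F.1, s i := by
    classical
    intro F G
    refine ⟨⟨F.1 ∪ G.1, by simpa using And.intro F.2 G.2⟩, ?_, ?_⟩ <;>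
      exact biUnion_subset_biUnion_left (by simp)
  rw [hU, hdir.measure_iUnion, iSup_subtype']

theorem ENNReal.rpow_one_div_le_of_le_mul_rpow {p q : ℝ} (hpq : p.HolderConjugate q)
    {T K : ℝ≥0∞} (hT : T ≠ ⊤) (h : T ≤ K * T ^ (1 / q)) : T ^ (1 / p) ≤ K := by
  rcases eq_or_ne T 0 with rfl | hT0
  · rw [zero_rpow_of_pos (by simpa using hpq.pos)]
    exact zero_le
  have hsplit : T ^ (1 / p) * T ^ (1 / q) = T := by
    rw [← rpow_add _ _ hT0 hT, one_div, one_div, hpq.inv_add_inv_eq_one, rpow_one]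
  exact (ENNReal.mul_le_mul_iff_left (rpow_pos (pos_iff_ne_zero.2 hT0) hT).ne'
    (rpow_ne_top_of_nonneg (by simpa using hpq.symm.nonneg) hT)).1 (hsplit.trans_le h)

theorem mem_dyadicCube_iff {n : ℕ} {k : ℤ} {m : Fin n → ℤ} {x : En n} :
    x ∈ dyadicCube n k m ↔ ∀ i, ⌊x i * 2 ^ k⌋ = m i := by
  have h2 : (0 : ℝ) < 2 ^ k := zpow_pos two_pos k
  simp only [dyadicCube, mem_ofPred_eq, Int.floor_eq_iff, zpow_neg, ← div_eq_mul_inv,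
    div_le_iff₀ h2, lt_div_iff₀ h2]

theorem Int.floor_mul_two_zpow_add_div (x : ℝ) (k : ℤ) (d : ℕ) :
    ⌊x * 2 ^ (k + d)⌋ / 2 ^ d = ⌊x * 2 ^ k⌋ := by
  have h : x * 2 ^ k = x * 2 ^ (k + d) / (2 ^ d : ℕ) := by
    rw [zpow_add₀ two_ne_zero, zpow_natCast]
    push_cast
    field_simp
  rw [h, Int.floor_div_natCast]
  push_cast
  rfl

theorem dyadicCube_subset_or_disjoint {n : ℕ} (k : ℤ) (d : ℕ) (m m' : Fin n → ℤ) :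
    dyadicCube n (k + d) m' ⊆ dyadicCube n k m ∨
      Disjoint (dyadicCube n (k + d) m') (dyadicCube n k m) := by
  by_cases h : ∀ i, m' i / 2 ^ d = m i
  · left
    intro x hx
    rw [mem_dyadicCube_iff] at hx ⊢
    intro i
    rw [← Int.floor_mul_two_zpow_add_div, hx i, h i]
  · right
    refine disjoint_left.2 fun x hx' hx => h fun i => ?_
    rw [mem_dyadicCube_iff] at hx hx'
    rw [← hx' i, Int.floor_mul_two_zpow_add_div, hx i]

theorem measurableSet_dyadicCube (n : ℕ) (k : ℤ) (m : Fin n → ℤ) :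
    MeasurableSet (dyadicCube n k m) := by
  simp only [dyadicCube, ofPred_forall, ofPred_and]
  exact .iInter fun i => (measurableSet_le measurable_const (by fun_prop)).inter
    (measurableSet_lt (by fun_prop) measurable_const)

abbrev DyadicIndex (n : ℕ) := ℤ × (Fin n → ℤ)

namespace DyadicIndex

variable {n : ℕ}

def cube (i : DyadicIndex n) : Set (En n) := dyadicCube n i.1 i.2

theorem measurableSet_cube (i : DyadicIndex n) : MeasurableSet i.cube :=
  measurableSet_dyadicCube n i.1 i.2

theorem cube_subset_or_disjoint {i j : DyadicIndex n} (h : i.1 ≤ j.1) :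
    j.cube ⊆ i.cube ∨ Disjoint j.cube i.cube := by
  obtain ⟨d, hd⟩ := Int.le.dest h
  have := dyadicCube_subset_or_disjoint i.1 d i.2 j.2
  rwa [hd] at this

theorem exists_pairwiseDisjoint_subset_cover (F : Finset (DyadicIndex n)) :
    ∃ F₀ ⊆ F, (F₀ : Set (DyadicIndex n)).PairwiseDisjoint cube ∧
      ∀ i ∈ F, ∃ j ∈ F₀, i.cube ⊆ j.cube := by
  classical
  induction F using Finset.strongInduction with
  | H F ih =>
  rcases F.eq_empty_or_nonempty with rfl | hne
  · exact ⟨∅, subset_rfl, by simp, by simp⟩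
  obtain ⟨i₀, hi₀, hmin⟩ := F.exists_min_image Prod.fst hne
  set F' := F.filter fun j => ¬ j.cube ⊆ i₀.cube
  obtain ⟨F₀, hsub, hdisj, hcover⟩ :=
    ih F' (Finset.filter_ssubset.2 ⟨i₀, hi₀, not_not.2 subset_rfl⟩)
  refine ⟨insert i₀ F₀, Finset.insert_subset hi₀ (hsub.trans (Finset.filter_subset _ _)),
    ?_, ?_⟩
  · rw [Finset.coe_insert]
    refine hdisj.insert fun j hj _ => ?_
    have hj' := Finset.mem_filter.1 (hsub hj)
    exact ((cube_subset_or_disjoint (hmin j hj'.1)).resolve_left hj'.2).symm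
  · intro i hi
    by_cases h : i.cube ⊆ i₀.cube
    · exact ⟨i₀, Finset.mem_insert_self _ _, h⟩
    · obtain ⟨j, hj, hij⟩ := hcover i (Finset.mem_filter.2 ⟨hi, h⟩)
      exact ⟨j, Finset.mem_insert_of_mem hj, hij⟩

theorem biUnion_cube_eq_of_cover {F₀ F : Finset (DyadicIndex n)} (hsub : F₀ ⊆ F)
    (hcover : ∀ i ∈ F, ∃ j ∈ F₀, i.cube ⊆ j.cube) : ⋃ j ∈ F₀, j.cube = ⋃ i ∈ F, i.cube := by
  refine subset_antisymm (biUnion_subset_biUnion_left hsub) (iUnion₂_subset fun i hi => ?_)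
  obtain ⟨j, hj, hij⟩ := hcover i hi
  exact hij.trans (subset_biUnion_of_mem hj)

end DyadicIndex

section DyadicMaximal

open DyadicIndex

variable {n : ℕ} (μ : Measure (En n))

def dyadicMaximal (g : En n → ℝ≥0∞) (x : En n) : ℝ≥0∞ :=
  ⨆ i : DyadicIndex n, i.cube.indicator (fun _ => ⨍⁻ y in i.cube, g y ∂μ) x

theorem measurable_dyadicMaximal (g : En n → ℝ≥0∞) : Measurable (dyadicMaximal μ g) :=
  .iSup fun i => measurable_const.indicator (measurableSet_cube i)

theorem setLAverage_le_dyadicMaximal (g : En n → ℝ≥0∞) {i : DyadicIndex n} {x : En n}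
    (hx : x ∈ i.cube) : ⨍⁻ y in i.cube, g y ∂μ ≤ dyadicMaximal μ g x :=
  le_iSup_of_le i (indicator_of_mem hx (fun _ => ⨍⁻ y in i.cube, g y ∂μ)).ge

theorem setOf_lt_dyadicMaximal (g : En n → ℝ≥0∞) (L : ℝ≥0∞) :
    {x | L < dyadicMaximal μ g x} =
      ⋃ i ∈ {i : DyadicIndex n | L < ⨍⁻ y in i.cube, g y ∂μ}, i.cube := by
  ext x
  simp only [dyadicMaximal, mem_ofPred_eq, lt_iSup_iff, mem_iUnion, exists_prop]
  refine exists_congr fun i => ?_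
  by_cases hx : x ∈ i.cube <;> simp [hx]

theorem mul_measure_biUnion_le_setLIntegral (g : En n → ℝ≥0∞) {L : ℝ≥0∞}
    {F : Finset (DyadicIndex n)} (hF : ∀ i ∈ F, L < ⨍⁻ y in i.cube, g y ∂μ) :
    L * μ (⋃ i ∈ F, i.cube) ≤ ∫⁻ x in ⋃ i ∈ F, i.cube, g x ∂μ := by
  obtain ⟨F₀, hsub, hdisj, hcover⟩ := exists_pairwiseDisjoint_subset_cover F
  rw [← biUnion_cube_eq_of_cover hsub hcover,
    measure_biUnion_finset hdisj fun j _ => measurableSet_cube j,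
    lintegral_biUnion_finset hdisj (fun j _ => measurableSet_cube j), Finset.mul_sum]
  refine Finset.sum_le_sum fun j hj => ENNReal.mul_le_of_le_div ?_
  rw [← setLAverage_eq]
  exact (hF j (hsub hj)).le

theorem mul_measure_lt_dyadicMaximal_le (g : En n → ℝ≥0∞) (L : ℝ≥0∞) :
    L * μ {x | L < dyadicMaximal μ g x} ≤ ∫⁻ x in {x | L < dyadicMaximal μ g x}, g x ∂μ := by
  rw [setOf_lt_dyadicMaximal, measure_biUnion_eq_iSup_finset, ENNReal.mul_iSup]
  refine iSup_le fun F => ?_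
  rw [ENNReal.mul_iSup]
  refine iSup_le fun hF => ?_
  exact (mul_measure_biUnion_le_setLIntegral μ g hF).trans
    (lintegral_mono_set (biUnion_subset_biUnion_left hF))

theorem dyadicMaximal_le_add (g : En n → ℝ≥0∞) (s : ℝ≥0∞) (x : En n) :
    dyadicMaximal μ g x ≤ s + dyadicMaximal μ ({y | s < g y}.indicator g) x := by
  refine iSup_le fun i => ?_
  by_cases hx : x ∈ i.cube
  · have hpt : g ≤ fun y => s + {y | s < g y}.indicator g y := fun y => by
      by_cases hy : s < g y
      · simp [hy]
      · exact (not_lt.1 hy).trans le_self_add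
    have hconst : ⨍⁻ _ in i.cube, s ∂μ ≤ s := by
      rw [setLAverage_eq, setLIntegral_const, mul_div_assoc]
      exact mul_le_of_le_one_right' ENNReal.div_self_le_one
    rw [indicator_of_mem hx]
    calc ⨍⁻ y in i.cube, g y ∂μ
        ≤ ⨍⁻ y in i.cube, (s + {y | s < g y}.indicator g y) ∂μ :=
          setLAverage_mono_ae _ (.of_forall hpt)
      _ = ⨍⁻ _ in i.cube, s ∂μ + ⨍⁻ y in i.cube, {y | s < g y}.indicator g y ∂μ := by
          simp only [setLAverage_eq, lintegral_add_left measurable_const, ENNReal.add_div]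
      _ ≤ s + dyadicMaximal μ ({y | s < g y}.indicator g) x :=
          add_le_add hconst (setLAverage_le_dyadicMaximal μ _ hx)
  · rw [indicator_of_notMem hx]
    exact zero_le

theorem mul_measure_lt_dyadicMaximal_le_two_mul {g : En n → ℝ≥0∞} (hg : Measurable g) (t : ℝ) :
    ENNReal.ofReal t * μ {x | ENNReal.ofReal t < dyadicMaximal μ g x} ≤
      2 * ∫⁻ x in {x | ENNReal.ofReal t < 2 * g x}, g x ∂μ := by
  set s := ENNReal.ofReal t / 2
  have hs : s ≠ ⊤ := div_ne_top ofReal_ne_top two_ne_zero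
  have hlevel : {x | ENNReal.ofReal t < 2 * g x} = {x | s < g x} := by
    ext x
    simp only [mem_ofPred_eq, s, ENNReal.div_lt_iff (.inl two_ne_zero) (.inl ofNat_ne_top),
      mul_comm]
  have hsub : {x | ENNReal.ofReal t < dyadicMaximal μ g x} ⊆
      {x | s < dyadicMaximal μ ({y | s < g y}.indicator g) x} := fun x hx => by
    refine (ENNReal.add_lt_add_iff_left hs).1 ?_
    rw [show s + s = ENNReal.ofReal t from ENNReal.add_halves _]
    exact hx.trans_le (dyadicMaximal_le_add μ g s x)
  calc ENNReal.ofReal t * μ {x | ENNReal.ofReal t < dyadicMaximal μ g x}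
      = 2 * (s * μ {x | ENNReal.ofReal t < dyadicMaximal μ g x}) := by
        rw [← mul_assoc, ENNReal.mul_div_cancel two_ne_zero ofNat_ne_top]
    _ ≤ 2 * (s * μ {x | s < dyadicMaximal μ ({y | s < g y}.indicator g) x}) := by
        gcongr
    _ ≤ 2 * ∫⁻ x, {y | s < g y}.indicator g x ∂μ := by
        gcongr
        exact (mul_measure_lt_dyadicMaximal_le μ _ s).trans (setLIntegral_le_lintegral _ _)
    _ = 2 * ∫⁻ x in {x | ENNReal.ofReal t < 2 * g x}, g x ∂μ := by
        rw [hlevel, lintegral_indicator (measurableSet_lt measurable_const hg)]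

theorem lintegral_dyadicMaximal_rpow_le [SFinite μ] {g : En n → ℝ≥0∞} (hg : Measurable g)
    {p : ℝ} (hp : 1 < p) :
    (∫⁻ x, dyadicMaximal μ g x ^ p ∂μ) ^ (1 / p) ≤
      ENNReal.ofReal (p / (p - 1)) * (∫⁻ x, g x ^ p ∂μ) ^ (1 / p) := by
  have hM := measurable_dyadicMaximal μ g
  have hpq : p.HolderConjugate (p / (p - 1)) := Real.HolderConjugate.conjExponent hp
  rcases eq_or_ne (∫⁻ x, g x ^ p ∂μ) ⊤ with hI | hI
  · rw [hI, top_rpow_of_pos (by simpa using hpq.pos),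
      mul_top (ofReal_pos.2 (by simpa using hpq.symm.pos)).ne']
    exact le_top
  have hT : ∫⁻ x, dyadicMaximal μ g x ^ p ∂μ ≠ ⊤ := by
    have h := lintegral_rpow_le_of_mul_meas_lt_le μ hM (hg.const_mul 2) hg hp
      fun t _ => mul_measure_lt_dyadicMaximal_le_two_mul μ hg t
    have hpow : ∀ x, g x * (2 * g x) ^ (p - 1) = 2 ^ (p - 1) * g x ^ p := fun x => by
      have hsplit : g x ^ p = g x * g x ^ (p - 1) :=
        calc g x ^ p = g x ^ ((1 : ℝ) + (p - 1)) := by rw [add_sub_cancel]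
          _ = g x * g x ^ (p - 1) := by
            rw [rpow_add_of_nonneg _ _ zero_le_one (by linarith), rpow_one]
      rw [mul_rpow_of_nonneg _ _ (by linarith), hsplit]
      ring
    refine ne_top_of_le_ne_top ?_ h
    simp_rw [hpow]
    rw [lintegral_const_mul' _ _ (by finiteness)]
    finiteness
  have hholder : ∫⁻ x, g x * dyadicMaximal μ g x ^ (p - 1) ∂μ ≤
      (∫⁻ x, g x ^ p ∂μ) ^ (1 / p) *
        (∫⁻ x, dyadicMaximal μ g x ^ p ∂μ) ^ (1 / (p / (p - 1))) := by
    refine (ENNReal.lintegral_mul_le_Lp_mul_Lq μ hpq hg.aemeasurable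
      (hM.pow_const _).aemeasurable).trans_eq ?_
    congr 3 with x
    rw [← rpow_mul, mul_div_cancel₀ _ (by linarith : p - 1 ≠ 0)]
  refine rpow_one_div_le_of_le_mul_rpow hpq hT ?_
  calc ∫⁻ x, dyadicMaximal μ g x ^ p ∂μ
      ≤ 1 * ENNReal.ofReal (p / (p - 1)) * ∫⁻ x, g x * dyadicMaximal μ g x ^ (p - 1) ∂μ :=
        lintegral_rpow_le_of_mul_meas_lt_le μ hM hM hg hp fun t _ => by
          simpa using mul_measure_lt_dyadicMaximal_le μ g (ENNReal.ofReal t)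
    _ ≤ _ := by
        rw [one_mul, mul_assoc]
        gcongr

end DyadicMaximal

section Carleson

open DyadicIndex

def IsCarlesonSequence {n : ℕ} (μ : Measure (En n)) (a : DyadicIndex n → ℝ≥0∞) (A : ℝ≥0∞) :
    Prop :=
  ∀ R : DyadicIndex n, ∑' Q : {Q : DyadicIndex n // Q.cube ⊆ R.cube}, a Q ≤ A * μ R.cube

variable {n : ℕ} (μ : Measure (En n)) {a : DyadicIndex n → ℝ≥0∞} {A : ℝ≥0∞}

theorem sum_le_mul_measure_biUnion
    (hC : IsCarlesonSequence μ a A)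
    (F : Finset (DyadicIndex n)) : ∑ i ∈ F, a i ≤ A * μ (⋃ i ∈ F, i.cube) := by
  obtain ⟨F₀, hsub, hdisj, hcover⟩ := exists_pairwiseDisjoint_subset_cover F
  calc ∑ i ∈ F, a i
      ≤ ∑ i ∈ F, ∑ j ∈ F₀, {Q : DyadicIndex n | Q.cube ⊆ j.cube}.indicator a i :=
        Finset.sum_le_sum fun i hi => by
          obtain ⟨j, hj, hij⟩ := hcover i hi
          exact (indicator_of_mem (show i ∈ {Q : DyadicIndex n | Q.cube ⊆ j.cube} from hij)
            a).ge.trans (Finset.single_le_sum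
              (f := fun j => {Q : DyadicIndex n | Q.cube ⊆ j.cube}.indicator a i)
              (fun _ _ => zero_le) hj)
    _ = ∑ j ∈ F₀, ∑ i ∈ F, {Q : DyadicIndex n | Q.cube ⊆ j.cube}.indicator a i :=
        Finset.sum_comm
    _ ≤ ∑ j ∈ F₀, ∑' Q : {Q : DyadicIndex n // Q.cube ⊆ j.cube}, a Q :=
        Finset.sum_le_sum fun j _ => (ENNReal.sum_le_tsum _).trans_eq
          (tsum_subtype {Q : DyadicIndex n | Q.cube ⊆ j.cube} a).symm
    _ ≤ ∑ j ∈ F₀, A * μ j.cube := Finset.sum_le_sum fun j _ => hC j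
    _ = A * μ (⋃ i ∈ F, i.cube) := by
        rw [← Finset.mul_sum, ← measure_biUnion_finset hdisj fun j _ => measurableSet_cube j,
          biUnion_cube_eq_of_cover hsub hcover]

theorem withDensity_count_le_mul_measure_biUnion
    (hC : IsCarlesonSequence μ a A)
    (S : Set (DyadicIndex n)) : Measure.count.withDensity a S ≤ A * μ (⋃ i ∈ S, i.cube) := by
  classical
  rw [withDensity_apply _ S.to_countable.measurableSet,
    ← lintegral_indicator S.to_countable.measurableSet, lintegral_count,
    ENNReal.tsum_eq_iSup_sum]
  refine iSup_le fun F => ?_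
  have hF : ↑(F.filter fun i => i ∈ S) ⊆ S := fun i hi => (Finset.mem_filter.1 hi).2
  calc ∑ i ∈ F, S.indicator a i = ∑ i ∈ F.filter (fun i => i ∈ S), a i := by
        simp only [indicator_apply, Finset.sum_filter]
    _ ≤ A * μ (⋃ i ∈ F.filter (fun i => i ∈ S), i.cube) := sum_le_mul_measure_biUnion μ hC _
    _ ≤ A * μ (⋃ i ∈ S, i.cube) := by
        gcongr A * μ ?_
        exact biUnion_subset_biUnion_left hF

theorem tsum_mul_setLAverage_rpow_le [SFinite μ]
    (hC : IsCarlesonSequence μ a A)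
    (g : En n → ℝ≥0∞) {p : ℝ} (hp : 0 < p) :
    ∑' Q : DyadicIndex n, a Q * (⨍⁻ x in Q.cube, g x ∂μ) ^ p ≤
      A * ∫⁻ x, dyadicMaximal μ g x ^ p ∂μ := by
  have hsum : ∑' Q : DyadicIndex n, a Q * (⨍⁻ x in Q.cube, g x ∂μ) ^ p =
      ∫⁻ Q, (⨍⁻ x in Q.cube, g x ∂μ) ^ p ∂(Measure.count.withDensity a) := by
    rw [lintegral_withDensity_eq_lintegral_mul _ (measurable_of_countable _)
      (measurable_of_countable _), lintegral_count]
    rfl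
  rw [hsum]
  refine lintegral_rpow_le_of_meas_lt_le (measurable_of_countable _)
    (measurable_dyadicMaximal μ g) hp fun t _ => ?_
  rw [setOf_lt_dyadicMaximal]
  exact withDensity_count_le_mul_measure_biUnion μ hC _

theorem carleson_embedding [SFinite μ]
    (hC : IsCarlesonSequence μ a A)
    {g : En n → ℝ≥0∞} (hg : Measurable g) {p : ℝ} (hp : 1 < p) :
    (∑' Q : DyadicIndex n, a Q * (⨍⁻ x in Q.cube, g x ∂μ) ^ p) ^ (1 / p) ≤
      A ^ (1 / p) * ENNReal.ofReal (p / (p - 1)) * (∫⁻ x, g x ^ p ∂μ) ^ (1 / p) := by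
  have hp0 : 0 < 1 / p := by positivity
  calc (∑' Q : DyadicIndex n, a Q * (⨍⁻ x in Q.cube, g x ∂μ) ^ p) ^ (1 / p)
      ≤ (A * ∫⁻ x, dyadicMaximal μ g x ^ p ∂μ) ^ (1 / p) :=
        rpow_le_rpow (tsum_mul_setLAverage_rpow_le μ hC g (by linarith)) hp0.le
    _ = A ^ (1 / p) * (∫⁻ x, dyadicMaximal μ g x ^ p ∂μ) ^ (1 / p) :=
        mul_rpow_of_nonneg _ _ hp0.le
    _ ≤ A ^ (1 / p) * ENNReal.ofReal (p / (p - 1)) * (∫⁻ x, g x ^ p ∂μ) ^ (1 / p) := by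
        rw [mul_assoc]
        gcongr
        exact lintegral_dyadicMaximal_rpow_le μ hg hp

end Carleson

theorem setLAverage_withDensity_ofReal {n : ℕ} {w f : En n → ℝ}
    (hw : AEMeasurable (fun x => ENNReal.ofReal (w x))) (hf : Measurable f) {s : Set (En n)}
    (hs : MeasurableSet s) :
    ⨍⁻ x in s, ENNReal.ofReal (f x) ∂(volume.withDensity fun x => ENNReal.ofReal (w x)) =
      (wMeas w s)⁻¹ * ∫⁻ x in s, ENNReal.ofReal (f x) * ENNReal.ofReal (w x) := by
  rw [setLAverage_eq, ENNReal.div_eq_inv_mul, wMeas, withDensity_apply' _ s,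
    restrict_withDensity hs,
    lintegral_withDensity_eq_lintegral_mul₀ hw.restrict hf.ennreal_ofReal.aemeasurable]
  exact congrArg _ (lintegral_congr fun x => mul_comm (ENNReal.ofReal (w x)) _)

theorem lintegral_rpow_withDensity_ofReal_le_wnorm {n : ℕ} {w f : En n → ℝ}
    (hw : AEMeasurable (fun x => ENNReal.ofReal (w x))) (hf : Measurable f) {p : ℝ}
    (hp : 0 < p) :
    (∫⁻ x, ENNReal.ofReal (f x) ^ p ∂(volume.withDensity fun x => ENNReal.ofReal (w x))) ^
      (1 / p) ≤ wnorm p w f := by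
  rw [wnorm, wnormE, lintegral_withDensity_eq_lintegral_mul₀ hw
    (hf.ennreal_ofReal.pow_const p).aemeasurable]
  gcongr with x
  rw [Pi.mul_apply, mul_comm]
  gcongr
  exact le_abs_self _

theorem dyadic_carleson_embedding_general (n : ℕ)
    (w : En n → ℝ) (hwloc : LocallyIntegrable w volume)
    (a : ℤ × (Fin n → ℤ) → ℝ) (A : ℝ)
    (hCarl : ∀ R : ℤ × (Fin n → ℤ),
      (∑' Q : {Q : ℤ × (Fin n → ℤ) // dyadicCube n Q.1 Q.2 ⊆ dyadicCube n R.1 R.2},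
        ENNReal.ofReal (a Q.1)) ≤ ENNReal.ofReal A * wMeas w (dyadicCube n R.1 R.2))
    (p : ℝ) (hp : 1 < p) (f : En n → ℝ) (hfm : Measurable f) :
    (∑' Q : ℤ × (Fin n → ℤ), ENNReal.ofReal (a Q) *
        ((wMeas w (dyadicCube n Q.1 Q.2))⁻¹ *
          ∫⁻ x in dyadicCube n Q.1 Q.2, ENNReal.ofReal (f x) * ENNReal.ofReal (w x)) ^ p) ^
        (1/p) ≤
      ENNReal.ofReal A ^ (1/p) * ENNReal.ofReal (p/(p-1)) * wnorm p w f := by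
  have hw : AEMeasurable (fun x => ENNReal.ofReal (w x)) :=
    hwloc.aestronglyMeasurable.aemeasurable.ennreal_ofReal
  set μ := volume.withDensity fun x => ENNReal.ofReal (w x)
  have hC : IsCarlesonSequence μ (fun Q => ENNReal.ofReal (a Q)) (ENNReal.ofReal A) :=
    fun R => (hCarl R).trans_eq (by rw [wMeas, ← withDensity_apply' _]; rfl)
  calc _ = (∑' Q : DyadicIndex n, ENNReal.ofReal (a Q) *
        (⨍⁻ x in Q.cube, ENNReal.ofReal (f x) ∂μ) ^ p) ^ (1 / p) := by
        simp only [← setLAverage_withDensity_ofReal hw hfm (measurableSet_dyadicCube n _ _)]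
        rfl
    _ ≤ _ := carleson_embedding μ hC hfm.ennreal_ofReal hp
    _ ≤ _ := by
        gcongr
        exact lintegral_rpow_withDensity_ofReal_le_wnorm hw hfm (by linarith)

/-- Theorem 3.7: the dyadic Carleson embedding theorem. -/
theorem dyadic_carleson_embedding (n : ℕ) (hn : 1 ≤ n)
    (w : En n → ℝ) (hw0 : ∀ x, 0 ≤ w x) (hwloc : LocallyIntegrable w volume)
    (hwpos : ∀ᵐ x : En n, 0 < w x)
    (a : ℤ × (Fin n → ℤ) → ℝ) (ha : ∀ Q, 0 ≤ a Q) (A : ℝ) (hA : 0 < A)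
    (hCarl : ∀ R : ℤ × (Fin n → ℤ),
      (∑' Q : {Q : ℤ × (Fin n → ℤ) // dyadicCube n Q.1 Q.2 ⊆ dyadicCube n R.1 R.2},
        ENNReal.ofReal (a Q.1)) ≤ ENNReal.ofReal A * wMeas w (dyadicCube n R.1 R.2))
    (p : ℝ) (hp : 1 < p) (f : En n → ℝ) (hf0 : ∀ x, 0 ≤ f x) (hfm : Measurable f)
    (hfLp : wnorm p w f < ⊤) :
    (∑' Q : ℤ × (Fin n → ℤ), ENNReal.ofReal (a Q) *
        ((wMeas w (dyadicCube n Q.1 Q.2))⁻¹ *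
          ∫⁻ x in dyadicCube n Q.1 Q.2, ENNReal.ofReal (f x) * ENNReal.ofReal (w x)) ^ p) ^
        (1/p) ≤
      ENNReal.ofReal A ^ (1/p) * ENNReal.ofReal (p/(p-1)) * wnorm p w f :=
  dyadic_carleson_embedding_general n w hwloc a A hCarl p hp f hfm
end
end
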